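/- Fix real parameters μ₁, μ₂, μ₃, μ₄ and ε ∈ ℝ (the charge). Define the following first-order differential operators acting on smooth functions φ : ℝ⁴ → ℂ: ξ₁^ε φ = cos x₃ ∂₁φ − sin x₃ ∂₂φ − iε(μ₁x₂ cos x₃ + μ₃ sin x₃ + μ₄ cos x₃)φ; ξ₂^ε φ = sin x₃ ∂₁φ + cos x₃ ∂₂φ − iε(μ₁x₂ sin x₃ − μ₃ cos x₃ + μ₄ sin x₃)φ; ξ₃^ε φ = ∂₃φ − iεμ₂x₄ φ; ξ₄^ε φ = ∂₄φ. Then for every smooth φ : ℝ⁴ → ℂ the commutators satisfy the relations of a one-dimensional central extension of e(2) ⊕ ℝ: [ξ₁^ε, ξ₂^ε]φ = iεμ₁ φ, [ξ₁^ε, ξ₃^ε]φ = ξ₂^ε φ, [ξ₂^ε, ξ₃^ε]φ = −ξ₁^ε φ, [ξ₃^ε, ξ₄^ε]φ = iεμ₂ φ, [ξ₁^ε, ξ₄^ε]φ = [ξ₂^ε, ξ₄^ε]φ = 0, where [A,B]φ = A(Bφ) − B(Aφ). -/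

import Mathlib

noncomputable section

/-- The partial derivative `∂ₖ φ (x)` of a complex-valued function on `ℝ⁴`. -/
def pd (k : Fin 4) (φ : (Fin 4 → ℝ) → ℂ) (x : Fin 4 → ℝ) : ℂ :=
  fderiv ℝ φ x (Pi.single k 1)

/-- The symmetry operators `ξₐ^ε` of the Klein–Gordon–Fock equation in the external
right-invariant electromagnetic field with 2-cocycle parameters `μ₁, μ₂, μ₃, μ₄` on
`E(2) × ℝ` (indexed from `0`). -/
def xiop (μ₁ μ₂ μ₃ μ₄ ε : ℝ) : Fin 4 → ((Fin 4 → ℝ) → ℂ) → ((Fin 4 → ℝ) → ℂ) :=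
  ![fun φ x => Real.cos (x 2) * pd 0 φ x - Real.sin (x 2) * pd 1 φ x
      - Complex.I * ε * (μ₁ * x 1 * Real.cos (x 2) + μ₃ * Real.sin (x 2)
          + μ₄ * Real.cos (x 2)) * φ x,
    fun φ x => Real.sin (x 2) * pd 0 φ x + Real.cos (x 2) * pd 1 φ x
      - Complex.I * ε * (μ₁ * x 1 * Real.sin (x 2) - μ₃ * Real.cos (x 2)
          + μ₄ * Real.sin (x 2)) * φ x,
    fun φ x => pd 2 φ x - Complex.I * ε * (μ₂ * x 3) * φ x,
    fun φ x => pd 3 φ x]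

namespace Aux

@[fun_prop] lemma diff_ofReal : Differentiable ℝ (fun t : ℝ => (t : ℂ)) :=
  Complex.ofRealCLM.differentiable

variable {φ f g : (Fin 4 → ℝ) → ℂ} {x : Fin 4 → ℝ} {k j : Fin 4}

lemma pd_contDiff (hφ : ContDiff ℝ (⊤ : ℕ∞) φ) (k : Fin 4) : ContDiff ℝ (⊤ : ℕ∞) (pd k φ) := by
  have h1 : ContDiff ℝ (⊤ : ℕ∞) (fderiv ℝ φ) := hφ.fderiv_right (by simp)
  exact ((ContinuousLinearMap.apply ℝ ℂ (Pi.single k 1 : Fin 4 → ℝ)).contDiff.comp h1 : _)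

lemma pd_diff (hφ : ContDiff ℝ (⊤ : ℕ∞) φ) (k : Fin 4) : Differentiable ℝ (pd k φ) :=
  (pd_contDiff hφ k).differentiable (by simp)

lemma pd_sub (hf : DifferentiableAt ℝ f x) (hg : DifferentiableAt ℝ g x) :
    pd k (fun y => f y - g y) x = pd k f x - pd k g x := by
  unfold pd; rw [fderiv_fun_sub hf hg]; rfl

lemma pd_add (hf : DifferentiableAt ℝ f x) (hg : DifferentiableAt ℝ g x) :
    pd k (fun y => f y + g y) x = pd k f x + pd k g x := by
  unfold pd; rw [fderiv_fun_add hf hg]; rfl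

lemma pd_mul (hf : DifferentiableAt ℝ f x) (hg : DifferentiableAt ℝ g x) :
    pd k (fun y => f y * g y) x = pd k f x * g x + f x * pd k g x := by
  unfold pd; rw [fderiv_fun_mul hf hg]; simp [mul_comm]; ring

lemma pd_const (c : ℂ) : pd k (fun _ => c) x = 0 := by
  unfold pd; rw [fderiv_fun_const]; rfl

lemma pd_comp (u : ℝ → ℝ) (hg : DifferentiableAt ℝ u (x j)) :
    pd k (fun y => (u (y j) : ℂ)) x
      = (Complex.ofReal (deriv u (x j))) * ((Pi.single k (1:ℝ) : Fin 4 → ℝ) j : ℝ) := by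
  have hproj : HasFDerivAt (fun y : Fin 4 → ℝ => y j)
      (ContinuousLinearMap.proj j : (Fin 4 → ℝ) →L[ℝ] ℝ) x :=
    (ContinuousLinearMap.proj j : (Fin 4 → ℝ) →L[ℝ] ℝ).hasFDerivAt
  have h1 : HasFDerivAt (fun y : Fin 4 → ℝ => u (y j))
      ((deriv u (x j)) • (ContinuousLinearMap.proj j : (Fin 4 → ℝ) →L[ℝ] ℝ)) x :=
    hg.hasDerivAt.comp_hasFDerivAt x hproj
  have h2 : HasFDerivAt (fun y : Fin 4 → ℝ => (u (y j) : ℂ))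
      (Complex.ofRealCLM.comp ((deriv u (x j)) • (ContinuousLinearMap.proj j : (Fin 4 → ℝ) →L[ℝ] ℝ))) x :=
    Complex.ofRealCLM.hasFDerivAt.comp x h1
  unfold pd
  rw [h2.fderiv]
  simp [mul_comm]

lemma pd_coord : pd k (fun y => ((y j : ℝ) : ℂ)) x
    = (((Pi.single k (1:ℝ) : Fin 4 → ℝ) j : ℝ) : ℂ) := by
  have := pd_comp (x := x) (k := k) (j := j) (fun t => t) differentiableAt_fun_id
  simpa using this

lemma pd_cos : pd k (fun y => (Real.cos (y 2) : ℂ)) x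
    = -(Real.sin (x 2) : ℂ) * (((Pi.single k (1:ℝ) : Fin 4 → ℝ) 2 : ℝ) : ℂ) := by
  have := pd_comp (x := x) (k := k) (j := 2) Real.cos (Real.differentiable_cos _)
  simpa [Real.deriv_cos] using this

lemma pd_sin : pd k (fun y => (Real.sin (y 2) : ℂ)) x
    = (Real.cos (x 2) : ℂ) * (((Pi.single k (1:ℝ) : Fin 4 → ℝ) 2 : ℝ) : ℂ) := by
  have := pd_comp (x := x) (k := k) (j := 2) Real.sin (Real.differentiable_sin _)
  simpa [Real.deriv_sin] using this

lemma pd_comm (hφ : ContDiff ℝ (⊤ : ℕ∞) φ) (j k : Fin 4) (x : Fin 4 → ℝ) :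
    pd j (pd k φ) x = pd k (pd j φ) x := by
  have hsym : IsSymmSndFDerivAt ℝ φ x :=
    hφ.contDiffAt.isSymmSndFDerivAt (by rw [minSmoothness_of_isRCLikeNormedField]; exact WithTop.coe_le_coe.mpr (le_top : (2:ℕ∞) ≤ ⊤))
  have hd : DifferentiableAt ℝ (fderiv ℝ φ) x :=
    ((hφ.fderiv_right ((by exact_mod_cast le_top))).differentiable (by simp : ((⊤ : ℕ∞) : WithTop ℕ∞) ≠ 0)) x
  have key : ∀ v : Fin 4 → ℝ, ∀ w : Fin 4 → ℝ,
      fderiv ℝ (fun y => fderiv ℝ φ y v) x w = fderiv ℝ (fderiv ℝ φ) x w v := by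
    intro v w
    rw [fderiv_clm_apply hd (differentiableAt_const v)]
    simp
  unfold pd
  rw [key, key, hsym]

end Aux

/-- for every smooth `φ : ℝ⁴ → ℂ`, the operators `ξₐ^ε` satisfy the
commutation relations of a one-dimensional central extension of `e(2) ⊕ ℝ`:
`[ξ₁^ε,ξ₂^ε] = iεμ₁`, `[ξ₁^ε,ξ₃^ε] = ξ₂^ε`, `[ξ₂^ε,ξ₃^ε] = −ξ₁^ε`,
`[ξ₃^ε,ξ₄^ε] = iεμ₂`, `[ξ₁^ε,ξ₄^ε] = [ξ₂^ε,ξ₄^ε] = 0`. -/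
theorem symmetry_operators_central_extension (μ₁ μ₂ μ₃ μ₄ ε : ℝ)
    (φ : (Fin 4 → ℝ) → ℂ) (hφ : ContDiff ℝ (⊤ : ℕ∞) φ) :
    (∀ x, xiop μ₁ μ₂ μ₃ μ₄ ε 0 (xiop μ₁ μ₂ μ₃ μ₄ ε 1 φ) x
        - xiop μ₁ μ₂ μ₃ μ₄ ε 1 (xiop μ₁ μ₂ μ₃ μ₄ ε 0 φ) x
        = Complex.I * ε * μ₁ * φ x) ∧
    (∀ x, xiop μ₁ μ₂ μ₃ μ₄ ε 0 (xiop μ₁ μ₂ μ₃ μ₄ ε 2 φ) x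
        - xiop μ₁ μ₂ μ₃ μ₄ ε 2 (xiop μ₁ μ₂ μ₃ μ₄ ε 0 φ) x
        = xiop μ₁ μ₂ μ₃ μ₄ ε 1 φ x) ∧
    (∀ x, xiop μ₁ μ₂ μ₃ μ₄ ε 1 (xiop μ₁ μ₂ μ₃ μ₄ ε 2 φ) x
        - xiop μ₁ μ₂ μ₃ μ₄ ε 2 (xiop μ₁ μ₂ μ₃ μ₄ ε 1 φ) x
        = -xiop μ₁ μ₂ μ₃ μ₄ ε 0 φ x) ∧
    (∀ x, xiop μ₁ μ₂ μ₃ μ₄ ε 2 (xiop μ₁ μ₂ μ₃ μ₄ ε 3 φ) x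
        - xiop μ₁ μ₂ μ₃ μ₄ ε 3 (xiop μ₁ μ₂ μ₃ μ₄ ε 2 φ) x
        = Complex.I * ε * μ₂ * φ x) ∧
    (∀ x, xiop μ₁ μ₂ μ₃ μ₄ ε 0 (xiop μ₁ μ₂ μ₃ μ₄ ε 3 φ) x
        - xiop μ₁ μ₂ μ₃ μ₄ ε 3 (xiop μ₁ μ₂ μ₃ μ₄ ε 0 φ) x = 0) ∧
    (∀ x, xiop μ₁ μ₂ μ₃ μ₄ ε 1 (xiop μ₁ μ₂ μ₃ μ₄ ε 3 φ) x
        - xiop μ₁ μ₂ μ₃ μ₄ ε 3 (xiop μ₁ μ₂ μ₃ μ₄ ε 1 φ) x = 0) := by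
  have hφd : Differentiable ℝ φ := hφ.differentiable (by simp)
  have h0 := Aux.pd_diff hφ 0
  have h1 := Aux.pd_diff hφ 1
  have h2 := Aux.pd_diff hφ 2
  have h3 := Aux.pd_diff hφ 3
  refine ⟨?_, ?_, ?_, ?_, ?_, ?_⟩
  · intro x
    have hsc : Complex.sin (x 2 : ℂ) ^ 2 + Complex.cos (x 2 : ℂ) ^ 2 = 1 :=
      Complex.sin_sq_add_cos_sq _
    simp only [xiop, Matrix.cons_val_zero, Matrix.cons_val_one, Matrix.head_cons,
      Matrix.cons_val_two, Matrix.tail_cons, Matrix.cons_val_three]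
    simp (disch := fun_prop) only [Aux.pd_sub, Aux.pd_add, Aux.pd_mul, Aux.pd_const,
      Aux.pd_coord, Aux.pd_cos, Aux.pd_sin, Pi.single_apply]
    simp only [Fin.reduceEq, if_true, if_false, ite_true, ite_false, reduceIte,
      Complex.ofReal_one, Complex.ofReal_zero, mul_one, mul_zero, zero_mul, one_mul,
      add_zero, zero_add, sub_zero, neg_zero, Complex.ofReal_cos, Complex.ofReal_sin]
    simp only [Aux.pd_comm hφ 1 0, Aux.pd_comm hφ 2 0, Aux.pd_comm hφ 2 1,
      Aux.pd_comm hφ 3 0, Aux.pd_comm hφ 3 1, Aux.pd_comm hφ 3 2]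
    linear_combination (Complex.I * ε * μ₁ * φ x) * hsc
  · intro x
    have hsc : Complex.sin (x 2 : ℂ) ^ 2 + Complex.cos (x 2 : ℂ) ^ 2 = 1 :=
      Complex.sin_sq_add_cos_sq _
    simp only [xiop, Matrix.cons_val_zero, Matrix.cons_val_one, Matrix.head_cons,
      Matrix.cons_val_two, Matrix.tail_cons, Matrix.cons_val_three]
    simp (disch := fun_prop) only [Aux.pd_sub, Aux.pd_add, Aux.pd_mul, Aux.pd_const,
      Aux.pd_coord, Aux.pd_cos, Aux.pd_sin, Pi.single_apply]
    simp only [Fin.reduceEq, if_true, if_false, ite_true, ite_false, reduceIte,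
      Complex.ofReal_one, Complex.ofReal_zero, mul_one, mul_zero, zero_mul, one_mul,
      add_zero, zero_add, sub_zero, neg_zero, Complex.ofReal_cos, Complex.ofReal_sin]
    simp only [Aux.pd_comm hφ 1 0, Aux.pd_comm hφ 2 0, Aux.pd_comm hφ 2 1,
      Aux.pd_comm hφ 3 0, Aux.pd_comm hφ 3 1, Aux.pd_comm hφ 3 2]
    ring
  · intro x
    have hsc : Complex.sin (x 2 : ℂ) ^ 2 + Complex.cos (x 2 : ℂ) ^ 2 = 1 :=
      Complex.sin_sq_add_cos_sq _
    simp only [xiop, Matrix.cons_val_zero, Matrix.cons_val_one, Matrix.head_cons,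
      Matrix.cons_val_two, Matrix.tail_cons, Matrix.cons_val_three]
    simp (disch := fun_prop) only [Aux.pd_sub, Aux.pd_add, Aux.pd_mul, Aux.pd_const,
      Aux.pd_coord, Aux.pd_cos, Aux.pd_sin, Pi.single_apply]
    simp only [Fin.reduceEq, if_true, if_false, ite_true, ite_false, reduceIte,
      Complex.ofReal_one, Complex.ofReal_zero, mul_one, mul_zero, zero_mul, one_mul,
      add_zero, zero_add, sub_zero, neg_zero, Complex.ofReal_cos, Complex.ofReal_sin]
    simp only [Aux.pd_comm hφ 1 0, Aux.pd_comm hφ 2 0, Aux.pd_comm hφ 2 1,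
      Aux.pd_comm hφ 3 0, Aux.pd_comm hφ 3 1, Aux.pd_comm hφ 3 2]
    ring
  · intro x
    have hsc : Complex.sin (x 2 : ℂ) ^ 2 + Complex.cos (x 2 : ℂ) ^ 2 = 1 :=
      Complex.sin_sq_add_cos_sq _
    simp only [xiop, Matrix.cons_val_zero, Matrix.cons_val_one, Matrix.head_cons,
      Matrix.cons_val_two, Matrix.tail_cons, Matrix.cons_val_three]
    simp (disch := fun_prop) only [Aux.pd_sub, Aux.pd_add, Aux.pd_mul, Aux.pd_const,
      Aux.pd_coord, Aux.pd_cos, Aux.pd_sin, Pi.single_apply]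
    simp only [Fin.reduceEq, if_true, if_false, ite_true, ite_false, reduceIte,
      Complex.ofReal_one, Complex.ofReal_zero, mul_one, mul_zero, zero_mul, one_mul,
      add_zero, zero_add, sub_zero, neg_zero, Complex.ofReal_cos, Complex.ofReal_sin]
    simp only [Aux.pd_comm hφ 1 0, Aux.pd_comm hφ 2 0, Aux.pd_comm hφ 2 1,
      Aux.pd_comm hφ 3 0, Aux.pd_comm hφ 3 1, Aux.pd_comm hφ 3 2]
    ring
  · intro x
    have hsc : Complex.sin (x 2 : ℂ) ^ 2 + Complex.cos (x 2 : ℂ) ^ 2 = 1 :=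
      Complex.sin_sq_add_cos_sq _
    simp only [xiop, Matrix.cons_val_zero, Matrix.cons_val_one, Matrix.head_cons,
      Matrix.cons_val_two, Matrix.tail_cons, Matrix.cons_val_three]
    simp (disch := fun_prop) only [Aux.pd_sub, Aux.pd_add, Aux.pd_mul, Aux.pd_const,
      Aux.pd_coord, Aux.pd_cos, Aux.pd_sin, Pi.single_apply]
    simp only [Fin.reduceEq, if_true, if_false, ite_true, ite_false, reduceIte,
      Complex.ofReal_one, Complex.ofReal_zero, mul_one, mul_zero, zero_mul, one_mul,
      add_zero, zero_add, sub_zero, neg_zero, Complex.ofReal_cos, Complex.ofReal_sin]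
    simp only [Aux.pd_comm hφ 1 0, Aux.pd_comm hφ 2 0, Aux.pd_comm hφ 2 1,
      Aux.pd_comm hφ 3 0, Aux.pd_comm hφ 3 1, Aux.pd_comm hφ 3 2]
    ring
  · intro x
    have hsc : Complex.sin (x 2 : ℂ) ^ 2 + Complex.cos (x 2 : ℂ) ^ 2 = 1 :=
      Complex.sin_sq_add_cos_sq _
    simp only [xiop, Matrix.cons_val_zero, Matrix.cons_val_one, Matrix.head_cons,
      Matrix.cons_val_two, Matrix.tail_cons, Matrix.cons_val_three]
    simp (disch := fun_prop) only [Aux.pd_sub, Aux.pd_add, Aux.pd_mul, Aux.pd_const,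
      Aux.pd_coord, Aux.pd_cos, Aux.pd_sin, Pi.single_apply]
    simp only [Fin.reduceEq, if_true, if_false, ite_true, ite_false, reduceIte,
      Complex.ofReal_one, Complex.ofReal_zero, mul_one, mul_zero, zero_mul, one_mul,
      add_zero, zero_add, sub_zero, neg_zero, Complex.ofReal_cos, Complex.ofReal_sin]
    simp only [Aux.pd_comm hφ 1 0, Aux.pd_comm hφ 2 0, Aux.pd_comm hφ 2 1,
      Aux.pd_comm hφ 3 0, Aux.pd_comm hφ 3 1, Aux.pd_comm hφ 3 2]
    ring
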